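/- Validity of both value-function cuts for the pessimistic variant (Corollary 1 of the paper): let (y′,z*) be a bilevel feasible pair, let Φ_tail be the tailored value-function bound built from (y′,z*), and let Φ_tight be the tightened value-function bound of z*. Then every pessimistically bilevel feasible pair (y,z) satisfies both π^F(y,z) ≥ Φ_tail(y) and π^F(y,z) ≥ Φ_tight(y). -/

import Mathlib

open Finset

attribute [local instance] Classical.propDecidable

/-- Data of an instance of the competitive dynamic facility location problem under
cumulative customer demand (CDFLP-CCD).  `pref j a b` means that customer `j`
strictly prefers option `a` over option `b`, where `none` is the no-service option. -/
structure CDFLP (I J : Type*) where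
  /-- number of time periods; the period set is `{1, …, T}` -/
  T : ℕ
  /-- spawning demand of customer `j` at period `t` -/
  d : J → ℕ → ℝ
  /-- reward per unit of demand captured at location `i` -/
  r : I → ℝ
  /-- splitting factor -/
  ρ : ℝ
  /-- strict preference: `pref j a b` means `a ≻_j b` -/
  pref : J → Option I → Option I → Prop

namespace CDFLP

variable {I J : Type*} [Fintype I] [Fintype J]

/-- The model hypotheses: `T ≥ 1`, nonnegative demands and rewards, `ρ ∈ [0,1]`,
and every `≻_j` is a strict linear order on `I ∪ {0}`. -/
def Valid (P : CDFLP I J) : Prop :=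
  1 ≤ P.T ∧ (∀ j t, 0 ≤ P.d j t) ∧ (∀ i, 0 ≤ P.r i) ∧
    0 ≤ P.ρ ∧ P.ρ ≤ 1 ∧ ∀ j, IsStrictTotalOrder (Option I) (P.pref j)

/-- The locations considered by customer `j`, i.e. those preferred over no service. -/
noncomputable def considered (P : CDFLP I J) (j : J) : Finset I :=
  Finset.univ.filter fun i => P.pref j (some i) none

/-- `w` is a location schedule: on the planning horizon it is `{0,1}`-valued and opens
at most one facility per period. -/
def IsSched (P : CDFLP I J) (w : I → ℕ → ℝ) : Prop :=
  ∀ t, 1 ≤ t → t ≤ P.T → (∀ i, w i t = 0 ∨ w i t = 1) ∧ (∑ i, w i t) ≤ 1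

/-- `A_j^t(y,z)`: considered locations of `j` opened by the leader or the follower
at period `t`. -/
noncomputable def captureSet (P : CDFLP I J) (y z : I → ℕ → ℝ) (j : J) (t : ℕ) : Finset I :=
  Finset.univ.filter fun i => P.pref j (some i) none ∧ (y i t = 1 ∨ z i t = 1)

/-- `t ∈ 𝒯` is a capture period of customer `j`. -/
def IsCapture (P : CDFLP I J) (y z : I → ℕ → ℝ) (j : J) (t : ℕ) : Prop :=
  1 ≤ t ∧ t ≤ P.T ∧ (P.captureSet y z j t).Nonempty

/-- `i` is the `≻_j`-greatest element of the capture set `A_j^t(y,z)`,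
i.e. `i = i*(j,t)`. -/
def IsPatron (P : CDFLP I J) (y z : I → ℕ → ℝ) (j : J) (t : ℕ) (i : I) : Prop :=
  i ∈ P.captureSet y z j t ∧
    ∀ k ∈ P.captureSet y z j t, k ≠ i → P.pref j (some i) (some k)

/-- The greatest capture period of `j` smaller than `t` (`0` if there is none). -/
noncomputable def lastCap (P : CDFLP I J) (y z : I → ℕ → ℝ) (j : J) (t : ℕ) : ℕ :=
  ((Finset.Ico 1 t).filter fun s => P.IsCapture y z j s).sup id

/-- `D_j^{ℓt}`: demand of customer `j` spawned in periods `ℓ+1, …, t`. -/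
noncomputable def D (P : CDFLP I J) (j : J) (ℓ t : ℕ) : ℝ :=
  ∑ s ∈ Finset.Icc (ℓ + 1) t, P.d j s

/-- `v_{ij}^{ℓt}(y,z)`: fraction of `D_j^{ℓt}` captured by the follower through
location `i` at period `t`. -/
noncomputable def v (P : CDFLP I J) (y z : I → ℕ → ℝ) (j : J) (i : I) (ℓ t : ℕ) : ℝ :=
  if P.IsCapture y z j t ∧ ℓ = P.lastCap y z j t ∧ P.IsPatron y z j t i ∧ z i t = 1 then
    1 - P.ρ * y i t
  else 0

/-- `u_{ij}^{ℓt}(y,z)`: fraction of `D_j^{ℓt}` captured by the leader through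
location `i` at period `t`. -/
noncomputable def u (P : CDFLP I J) (y z : I → ℕ → ℝ) (j : J) (i : I) (ℓ t : ℕ) : ℝ :=
  if P.IsCapture y z j t ∧ ℓ = P.lastCap y z j t ∧ P.IsPatron y z j t i ∧ y i t = 1 then
    1 - (1 - P.ρ) * z i t
  else 0

/-- The follower's profit `π^F(y,z)`. -/
noncomputable def profitF (P : CDFLP I J) (y z : I → ℕ → ℝ) : ℝ :=
  ∑ t ∈ Finset.Icc 1 P.T, ∑ ℓ ∈ Finset.range t, ∑ j : J, ∑ i ∈ P.considered j,
    P.r i * P.D j ℓ t * P.v y z j i ℓ t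

/-- The leader's profit `π^L(y,z)`. -/
noncomputable def profitL (P : CDFLP I J) (y z : I → ℕ → ℝ) : ℝ :=
  ∑ t ∈ Finset.Icc 1 P.T, ∑ ℓ ∈ Finset.range t, ∑ j : J, ∑ i ∈ P.considered j,
    P.r i * P.D j ℓ t * P.u y z j i ℓ t

/-- `(y,z)` is bilevel feasible: both are schedules and `z` is an optimal
reaction of the follower against `y`. -/
def BilevelFeasible (P : CDFLP I J) (y z : I → ℕ → ℝ) : Prop :=
  P.IsSched y ∧ P.IsSched z ∧ ∀ z', P.IsSched z' → P.profitF y z' ≤ P.profitF y z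


/-- The tailored value-function bound built from the pair `(y', zs)`, evaluated at a
leader schedule `y`. -/
noncomputable def tailoredBound (P : CDFLP I J) (y' zs y : I → ℕ → ℝ) : ℝ :=
  ∑ t ∈ Finset.Icc 1 P.T, ∑ ℓ ∈ Finset.range t, ∑ j : J, ∑ i ∈ P.considered j,
    P.r i * P.D j ℓ t * P.v y' zs j i ℓ t *
      (1 - (∑ k ∈ P.considered j, ∑ s ∈ Finset.Ioo ℓ t, y k s)
         - (∑ k ∈ Finset.univ.filter fun k => P.pref j (some k) (some i), y k t)
         - (if P.v y' zs j i ℓ t = 1 ∧ 0 < P.ρ then 1 else 0) * y i t)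

/-- `o_{ij}^{st}(y)`: the maximum of the `y`-values at locations/periods through which
the leader can intercept the demand portion spawned at period `s` and captured at
period `t` through location `i`; the maximum of an empty set is taken as `0`. -/
noncomputable def oMax (P : CDFLP I J) (y : I → ℕ → ℝ) (j : J) (i : I) (s t : ℕ) : ℝ :=
  max ((Finset.Ico s t ×ˢ P.considered j).fold max 0 fun p => y p.2 p.1)
      ((Finset.univ.filter fun k => P.pref j (some k) (some i)).fold max 0 fun k => y k t)

/-- The tightened value-function bound of the follower schedule `zs`, evaluated at a
leader schedule `y` (the `v`-values are taken against the empty leader schedule). -/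
noncomputable def tightenedBound (P : CDFLP I J) (zs y : I → ℕ → ℝ) : ℝ :=
  ∑ t ∈ Finset.Icc 1 P.T, ∑ ℓ ∈ Finset.range t, ∑ j : J, ∑ i ∈ P.considered j,
    P.r i * P.v (fun _ _ => 0) zs j i ℓ t *
      (P.D j ℓ t - (∑ s ∈ Finset.Icc (ℓ + 1) t, P.d j s * P.oMax y j i s t)
        - P.ρ * y i t * ∑ s ∈ Finset.Icc (ℓ + 1) t, P.d j s * (1 - P.oMax y j i s t))

/-- `z` is an optimal reaction of the follower against `y`, i.e. `z ∈ F(y)`. -/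
def FollowerOpt (P : CDFLP I J) (y z : I → ℕ → ℝ) : Prop :=
  P.IsSched z ∧ ∀ z', P.IsSched z' → P.profitF y z' ≤ P.profitF y z

/-- `(y,z)` is pessimistically bilevel feasible: `z ∈ F(y)` and `z` minimizes the
leader's profit among the optimal follower reactions. -/
def PessFeasible (P : CDFLP I J) (y z : I → ℕ → ℝ) : Prop :=
  P.IsSched y ∧ P.FollowerOpt y z ∧
    ∀ z', P.FollowerOpt y z' → P.profitL y z ≤ P.profitL y z'

end CDFLP

/-!
Both cuts bound `π^F(y, z*)`, which is at most `π^F(y, z)` because `z` is an optimal reaction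
to `y`. For a fixed customer `j` and period `t` a cut has at most one nonzero term, at the
patron `i` of the reference pair and the last capture period `ℓ` before `t`. If its coefficient
is positive, `y` opens nothing that `j` prefers to `i` at `t`, so `i` is still `j`'s patron under
`(y, z*)`, with the follower's share `1 - ρ y(i,t)`. The demand the cut credits to the follower
(all of `D_j^{ℓt}` in the tailored cut, where `y` opens nothing in `(ℓ, t)`; the portions not
intercepted by `y` in the tightened cut) was spawned after the last capture period under
`(y, z*)`, so the follower really collects it.
-/

namespace CDFLP

variable {I J : Type*}

section Demand

variable {P : CDFLP I J} {j : J} {ℓ t : ℕ}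

lemma D_nonneg (hd : ∀ s, 0 ≤ P.d j s) : 0 ≤ P.D j ℓ t :=
  sum_nonneg fun s _ => hd s

lemma D_anti (hd : ∀ s, 0 ≤ P.d j s) {ℓ' : ℕ} (h : ℓ' ≤ ℓ) : P.D j ℓ t ≤ P.D j ℓ' t :=
  sum_le_sum_of_subset_of_nonneg (Icc_subset_Icc (by omega) le_rfl) fun s _ _ => hd s

end Demand

variable [Fintype I]

section Basics

variable {P : CDFLP I J} {y z w : I → ℕ → ℝ} {j : J} {i : I} {ℓ s t : ℕ}

lemma IsSched.eq_zero_or_eq_one (hw : P.IsSched w) (h1 : 1 ≤ t) (h2 : t ≤ P.T) (i : I) :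
    w i t = 0 ∨ w i t = 1 :=
  (hw t h1 h2).1 i

lemma IsSched.le_one (hw : P.IsSched w) (h1 : 1 ≤ t) (h2 : t ≤ P.T) (i : I) : w i t ≤ 1 := by
  rcases hw.eq_zero_or_eq_one h1 h2 i with h | h <;> simp [h]

lemma IsSched.nonneg (hw : P.IsSched w) (h1 : 1 ≤ t) (h2 : t ≤ P.T) (i : I) : 0 ≤ w i t := by
  rcases hw.eq_zero_or_eq_one h1 h2 i with h | h <;> simp [h]

lemma IsSched.nonneg_of_mem_Ioo (hw : P.IsSched w) (ht : t ≤ P.T) {p : ℕ} (hp : p ∈ Ioo ℓ t)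
    (i : I) : 0 ≤ w i p := by
  have := mem_Ioo.1 hp
  exact hw.nonneg (by omega) (by omega) i

lemma IsSched.le_sum_sum_Ioo (hw : P.IsSched w) (ht : t ≤ P.T) {K : Finset I} {p : ℕ}
    (hi : i ∈ K) (hp : p ∈ Ioo ℓ t) : w i p ≤ ∑ k ∈ K, ∑ s ∈ Ioo ℓ t, w k s :=
  (single_le_sum (fun _ hs => hw.nonneg_of_mem_Ioo ht hs i) hp).trans
    (single_le_sum (f := fun k => ∑ s ∈ Ioo ℓ t, w k s)
      (fun k _ => sum_nonneg fun _ hs => hw.nonneg_of_mem_Ioo ht hs k) hi)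

lemma mem_considered : i ∈ P.considered j ↔ P.pref j (some i) none := by
  simp [considered]

lemma mem_captureSet :
    i ∈ P.captureSet y z j t ↔ P.pref j (some i) none ∧ (y i t = 1 ∨ z i t = 1) := by
  simp [captureSet]

lemma lastCap_lt (ht : 1 ≤ t) : P.lastCap y z j t < t := by
  refine (Finset.sup_lt_iff (show 0 < t by omega)).2 fun s hs => ?_
  exact (mem_Ico.1 (mem_filter.1 hs).1).2

lemma le_lastCap (hs1 : 1 ≤ s) (hst : s < t) (hc : P.IsCapture y z j s) :
    s ≤ P.lastCap y z j t :=
  le_sup (f := id) (mem_filter.2 ⟨mem_Ico.2 ⟨hs1, hst⟩, hc⟩)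

lemma lastCap_lt_of_forall_not_isCapture (hs : 1 ≤ s)
    (h : ∀ p, s ≤ p → p < t → ¬ P.IsCapture y z j p) : P.lastCap y z j t < s := by
  refine (Finset.sup_lt_iff (show 0 < s by omega)).2 fun p hp => ?_
  obtain ⟨hpt, hpc⟩ := mem_filter.1 hp
  by_contra! hsp
  exact h p hsp (mem_Ico.1 hpt).2 hpc

lemma IsCapture.exists_open_or_isCapture (hc : P.IsCapture y z j s) (w : I → ℕ → ℝ) :
    (∃ k ∈ P.considered j, y k s = 1) ∨ P.IsCapture w z j s := by
  obtain ⟨h1, h2, k, hk⟩ := hc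
  obtain ⟨hkp, hyk | hzk⟩ := mem_captureSet.1 hk
  · exact Or.inl ⟨k, mem_considered.2 hkp, hyk⟩
  · exact Or.inr ⟨h1, h2, k, mem_captureSet.2 ⟨hkp, Or.inr hzk⟩⟩

/-- Capture periods in `[s, t)` without a leader opening are capture periods of every
`(w, z)`, so they cannot lie beyond `lastCap w z j t`. -/
lemma lastCap_lt_of_vacant (hs : P.lastCap w z j t < s)
    (h : ∀ p, s ≤ p → p < t → ∀ k ∈ P.considered j, y k p ≠ 1) : P.lastCap y z j t < s := by
  refine lastCap_lt_of_forall_not_isCapture (by omega) fun p hsp hpt hc => ?_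
  rcases hc.exists_open_or_isCapture w with ⟨k, hk, hyk⟩ | hcw
  · exact h p hsp hpt k hk hyk
  · have := le_lastCap hcw.1 hpt hcw
    omega

lemma IsPatron.unique (hord : IsStrictOrder (Option I) (P.pref j)) {i' : I}
    (h : P.IsPatron y z j t i) (h' : P.IsPatron y z j t i') : i = i' := by
  by_contra hne
  exact asymm (h.2 i' h'.1 (Ne.symm hne)) (h'.2 i h.1 hne)

lemma IsPatron.of_unblocked (hord : Std.Trichotomous (P.pref j))
    (hpat : P.IsPatron w z j t i) (hz : z i t = 1)
    (hy : ∀ k, P.pref j (some k) (some i) → y k t ≠ 1) : P.IsPatron y z j t i := by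
  refine ⟨mem_captureSet.2 ⟨(mem_captureSet.1 hpat.1).1, Or.inr hz⟩, fun k hk hki => ?_⟩
  obtain ⟨hkp, hyk | hzk⟩ := mem_captureSet.1 hk
  · rcases trichotomous_of (P.pref j) (some i) (some k) with h | h | h
    · exact h
    · exact absurd (Option.some.inj h).symm hki
    · exact absurd hyk (hy k h)
  · exact hpat.2 k (mem_captureSet.2 ⟨hkp, Or.inr hzk⟩) hki

lemma v_eq_of_ne_zero (h : P.v y z j i ℓ t ≠ 0) :
    P.IsCapture y z j t ∧ ℓ = P.lastCap y z j t ∧ P.IsPatron y z j t i ∧ z i t = 1 ∧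
      P.v y z j i ℓ t = 1 - P.ρ * y i t := by
  unfold v at h ⊢
  split_ifs at h ⊢ with hc
  · exact ⟨hc.1, hc.2.1, hc.2.2.1, hc.2.2.2, rfl⟩
  · exact absurd rfl h

lemma v_lastCap_eq (hpat : P.IsPatron y z j t i) (hz : z i t = 1) (h1 : 1 ≤ t)
    (h2 : t ≤ P.T) : P.v y z j i (P.lastCap y z j t) t = 1 - P.ρ * y i t :=
  if_pos ⟨⟨h1, h2, i, hpat.1⟩, rfl, hpat, hz⟩

lemma v_nonneg (hρ : P.ρ ≤ 1) (hy : P.IsSched y) : 0 ≤ P.v y z j i ℓ t := by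
  unfold v
  split_ifs with h
  · obtain ⟨⟨h1, h2, -⟩, -⟩ := h
    rcases hy.eq_zero_or_eq_one h1 h2 i with h0 | h0 <;> simp [h0, hρ]
  · exact le_rfl

lemma oMax_nonneg : 0 ≤ P.oMax y j i s t :=
  le_max_of_le_left ((le_fold_max _).2 (Or.inl le_rfl))

lemma le_oMax_of_mem_Ico {p : ℕ} {k : I} (hp : p ∈ Ico s t) (hk : k ∈ P.considered j) :
    y k p ≤ P.oMax y j i s t :=
  le_max_of_le_left ((le_fold_max _).2 (Or.inr ⟨(p, k), mem_product.2 ⟨hp, hk⟩, le_rfl⟩))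

lemma le_oMax_of_pref {k : I} (hk : P.pref j (some k) (some i)) : y k t ≤ P.oMax y j i s t :=
  le_max_of_le_right ((le_fold_max _).2 (Or.inr ⟨k, by simpa using hk, le_rfl⟩))

end Basics

noncomputable def profitFAt (P : CDFLP I J) (y z : I → ℕ → ℝ) (j : J) (t : ℕ) : ℝ :=
  ∑ ℓ ∈ range t, ∑ i ∈ P.considered j, P.r i * P.D j ℓ t * P.v y z j i ℓ t

section ProfitAt

variable {P : CDFLP I J} {y z w : I → ℕ → ℝ} {j : J} {i : I} {ℓ t : ℕ}

lemma profitF_term_nonneg (hP : P.Valid) (hy : P.IsSched y) :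
    0 ≤ P.r i * P.D j ℓ t * P.v y z j i ℓ t :=
  mul_nonneg (mul_nonneg (hP.2.2.1 i) (D_nonneg (hP.2.1 j))) (v_nonneg hP.2.2.2.2.1 hy)

lemma profitFAt_nonneg (hP : P.Valid) (hy : P.IsSched y) : 0 ≤ P.profitFAt y z j t :=
  sum_nonneg fun _ _ => sum_nonneg fun _ _ => profitF_term_nonneg hP hy

lemma profitF_term_le_profitFAt (hP : P.Valid) (hy : P.IsSched y) (hℓ : ℓ < t)
    (hi : i ∈ P.considered j) : P.r i * P.D j ℓ t * P.v y z j i ℓ t ≤ P.profitFAt y z j t :=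
  calc P.r i * P.D j ℓ t * P.v y z j i ℓ t
      ≤ ∑ i' ∈ P.considered j, P.r i' * P.D j ℓ t * P.v y z j i' ℓ t :=
        single_le_sum (f := fun i' => P.r i' * P.D j ℓ t * P.v y z j i' ℓ t)
          (fun _ _ => profitF_term_nonneg hP hy) hi
    _ ≤ P.profitFAt y z j t :=
        single_le_sum (f := fun ℓ => ∑ i' ∈ P.considered j, P.r i' * P.D j ℓ t * P.v y z j i' ℓ t)
          (fun _ _ => sum_nonneg fun _ _ => profitF_term_nonneg hP hy) (mem_range.2 hℓ)

/-- For fixed `j` and `t`, at most one pair `(ℓ, i)` has `v_{ij}^{ℓt}(w, z) ≠ 0`. -/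
lemma sum_le_of_v_support (hord : IsStrictOrder (Option I) (P.pref j)) (ht : 1 ≤ t)
    {F : ℕ → I → ℝ} {R : ℝ} (hR : 0 ≤ R) (hF : ∀ ℓ i, P.v w z j i ℓ t = 0 → F ℓ i = 0)
    (hle : ∀ ℓ, ∀ i ∈ P.considered j, P.v w z j i ℓ t ≠ 0 → F ℓ i ≤ R) :
    ∑ ℓ ∈ range t, ∑ i ∈ P.considered j, F ℓ i ≤ R := by
  by_cases hex : ∃ i₀ ∈ P.considered j, P.v w z j i₀ (P.lastCap w z j t) t ≠ 0
  · obtain ⟨i₀, hi₀, hv₀⟩ := hex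
    have hpat₀ := (v_eq_of_ne_zero hv₀).2.2.1
    rw [sum_eq_single_of_mem _ (mem_range.2 (lastCap_lt ht)) fun ℓ _ hℓ =>
        sum_eq_zero fun i _ => hF ℓ i (not_not.1 fun hv => hℓ (v_eq_of_ne_zero hv).2.1),
      sum_eq_single_of_mem _ hi₀ fun i _ hi => hF _ i (not_not.1 fun hv =>
        hi (hpat₀.unique hord (v_eq_of_ne_zero hv).2.2.1).symm)]
    exact hle _ i₀ hi₀ hv₀
  · push Not at hex
    rw [sum_eq_zero fun ℓ _ => sum_eq_zero fun i hi => hF ℓ i (by_contra fun hv =>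
      hv (by rw [(v_eq_of_ne_zero hv).2.1]; exact hex i hi))]
    exact hR

lemma unblocked_le_profitFAt (hP : P.Valid) (hy : P.IsSched y) (h1 : 1 ≤ t) (h2 : t ≤ P.T)
    (hi : i ∈ P.considered j) (hpat : P.IsPatron w z j t i) (hz : z i t = 1)
    (hblock : ∀ k, P.pref j (some k) (some i) → y k t ≠ 1) :
    P.r i * P.D j (P.lastCap y z j t) t * (1 - P.ρ * y i t) ≤ P.profitFAt y z j t := by
  have hpat' := hpat.of_unblocked (hP.2.2.2.2.2 j).toTrichotomous hz hblock
  rw [← v_lastCap_eq hpat' hz h1 h2]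
  exact profitF_term_le_profitFAt hP hy (lastCap_lt h1) hi

end ProfitAt

/-- The splitting correction of the tailored cut, with `a = y'(i,t)` and `b = y(i,t)`: a
leader co-location at `i` shrinks the follower's share below the reference one only when
that share is full and `ρ > 0`. -/
lemma one_sub_mul_le_one_sub_mul_of_ite_mul_lt_one {ρ a b : ℝ} (hρ : 0 ≤ ρ)
    (ha : a = 0 ∨ a = 1) (hb : b = 0 ∨ b = 1)
    (h : (if 1 - ρ * a = 1 ∧ 0 < ρ then 1 else 0) * b < 1) : 1 - ρ * a ≤ 1 - ρ * b := by
  rcases ha with rfl | rfl <;> rcases hb with rfl | rfl <;> simp at h ⊢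
  · exact le_of_not_gt fun hρ' => by simp [hρ'] at h
  · exact hρ

section Terms

variable {P : CDFLP I J} {y' zs y : I → ℕ → ℝ} {j : J} {i : I} {ℓ t : ℕ}

lemma tailored_term_le_profitFAt (hP : P.Valid) (hy' : P.IsSched y') (hy : P.IsSched y)
    (h1 : 1 ≤ t) (h2 : t ≤ P.T) (hi : i ∈ P.considered j) (hv : P.v y' zs j i ℓ t ≠ 0) :
    P.r i * P.D j ℓ t * P.v y' zs j i ℓ t *
      (1 - (∑ k ∈ P.considered j, ∑ s ∈ Ioo ℓ t, y k s)
         - (∑ k ∈ univ.filter fun k => P.pref j (some k) (some i), y k t)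
         - (if P.v y' zs j i ℓ t = 1 ∧ 0 < P.ρ then 1 else 0) * y i t)
      ≤ P.profitFAt y zs j t := by
  have ⟨_, hd, hr, hρ₀, hρ₁, _⟩ := hP
  obtain ⟨-, hℓ, hpat, hz, hv_eq⟩ := v_eq_of_ne_zero hv
  set S₁ := ∑ k ∈ P.considered j, ∑ s ∈ Ioo ℓ t, y k s
  set S₂ := ∑ k ∈ univ.filter fun k => P.pref j (some k) (some i), y k t
  set S₃ := (if P.v y' zs j i ℓ t = 1 ∧ 0 < P.ρ then 1 else 0) * y i t
  have hS₁ : 0 ≤ S₁ := sum_nonneg fun k _ => sum_nonneg fun _ hp => hy.nonneg_of_mem_Ioo h2 hp k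
  have hS₂ : 0 ≤ S₂ := sum_nonneg fun k _ => hy.nonneg h1 h2 k
  have hS₃ : 0 ≤ S₃ := mul_nonneg (by split_ifs <;> norm_num) (hy.nonneg h1 h2 i)
  have hterm : 0 ≤ P.r i * P.D j ℓ t * P.v y' zs j i ℓ t := profitF_term_nonneg hP hy'
  rcases le_or_gt (1 - S₁ - S₂ - S₃) 0 with hB | hB
  · exact (mul_nonpos_of_nonneg_of_nonpos hterm hB).trans (profitFAt_nonneg hP hy)
  have hvacant : ∀ p, ℓ < p → p < t → ∀ k ∈ P.considered j, y k p ≠ 1 :=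
    fun p hℓp hpt k hk hyk => by linarith [hy.le_sum_sum_Ioo h2 hk (mem_Ioo.2 ⟨hℓp, hpt⟩)]
  have hunblocked : ∀ k, P.pref j (some k) (some i) → y k t ≠ 1 := by
    intro k hk hyk
    have : y k t ≤ S₂ := single_le_sum (f := fun k => y k t)
      (fun k _ => hy.nonneg h1 h2 k) (by simpa using hk)
    linarith
  have hv_le : P.v y' zs j i ℓ t ≤ 1 - P.ρ * y i t := by
    have hS₃_lt : S₃ < 1 := by linarith
    simp only [S₃, hv_eq] at hS₃_lt
    rw [hv_eq]
    exact one_sub_mul_le_one_sub_mul_of_ite_mul_lt_one hρ₀ (hy'.eq_zero_or_eq_one h1 h2 i)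
      (hy.eq_zero_or_eq_one h1 h2 i) hS₃_lt
  have hlast : P.lastCap y zs j t ≤ ℓ := Nat.lt_succ_iff.1 <|
    lastCap_lt_of_vacant (w := y') (by omega) fun p hp hpt => hvacant p (by omega) hpt
  have hD := D_nonneg (ℓ := ℓ) (t := t) (hd j)
  have hri := hr i
  calc _ ≤ P.r i * P.D j ℓ t * P.v y' zs j i ℓ t :=
        mul_le_of_le_one_right hterm (by linarith)
    _ ≤ P.r i * P.D j ℓ t * (1 - P.ρ * y i t) := by gcongr
    _ ≤ P.r i * P.D j (P.lastCap y zs j t) t * (1 - P.ρ * y i t) := by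
        gcongr
        · exact (v_nonneg hρ₁ hy').trans hv_le
        · exact D_anti (hd j) hlast
    _ ≤ P.profitFAt y zs j t := unblocked_le_profitFAt hP hy h1 h2 hi hpat hz hunblocked

/-- Demand spawned at a period `s` with `o_{ij}^{ℓst}(y) < 1` escapes every leader
opening before `t`, so `s` lies after the last capture period of `(y, z)`. -/
lemma sum_d_mul_one_sub_oMax_le (hd : ∀ s, 0 ≤ P.d j s) (w : I → ℕ → ℝ) :
    ∑ s ∈ Icc (P.lastCap w zs j t + 1) t, P.d j s * (1 - P.oMax y j i s t)
      ≤ P.D j (P.lastCap y zs j t) t := by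
  set ℓ := P.lastCap y zs j t
  calc _ ≤ ∑ s ∈ Icc (P.lastCap w zs j t + 1) t, if ℓ < s then P.d j s else 0 := by
        refine sum_le_sum fun s hs => ?_
        rcases lt_or_ge (P.oMax y j i s t) 1 with ho | ho
        · have hℓs : ℓ < s := lastCap_lt_of_vacant (w := w) (by simp at hs; omega)
            fun p hsp hpt k hk hyk => by
              linarith [le_oMax_of_mem_Ico (y := y) (i := i) (mem_Ico.2 ⟨hsp, hpt⟩) hk]
          rw [if_pos hℓs]
          nlinarith [hd s, oMax_nonneg (P := P) (y := y) (j := j) (i := i) (s := s) (t := t)]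
        · refine (mul_nonpos_of_nonneg_of_nonpos (hd s) (by linarith)).trans ?_
          split_ifs
          exacts [hd s, le_rfl]
    _ = ∑ s ∈ (Icc (P.lastCap w zs j t + 1) t).filter (ℓ < ·), P.d j s := (sum_filter _ _).symm
    _ ≤ P.D j ℓ t := sum_le_sum_of_subset_of_nonneg
        (fun s hs => by simp only [mem_filter, mem_Icc] at hs ⊢; omega) fun s _ _ => hd s

lemma tightened_term_le_profitFAt (hP : P.Valid) (hy : P.IsSched y) (h1 : 1 ≤ t)
    (h2 : t ≤ P.T) (hi : i ∈ P.considered j) (hv : P.v (fun _ _ => 0) zs j i ℓ t ≠ 0) :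
    P.r i * P.v (fun _ _ => 0) zs j i ℓ t *
      (P.D j ℓ t - (∑ s ∈ Icc (ℓ + 1) t, P.d j s * P.oMax y j i s t)
        - P.ρ * y i t * ∑ s ∈ Icc (ℓ + 1) t, P.d j s * (1 - P.oMax y j i s t))
      ≤ P.profitFAt y zs j t := by
  have ⟨_, hd, hr, hρ₀, hρ₁, _⟩ := hP
  obtain ⟨-, rfl, hpat, hz, hv_eq⟩ := v_eq_of_ne_zero hv
  set ℓ := P.lastCap (fun _ _ => 0) zs j t
  set S := ∑ s ∈ Icc (ℓ + 1) t, P.d j s * (1 - P.oMax y j i s t)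
  have hbracket : P.D j ℓ t - (∑ s ∈ Icc (ℓ + 1) t, P.d j s * P.oMax y j i s t)
      - P.ρ * y i t * S = (1 - P.ρ * y i t) * S := by
    rw [D, sub_eq_iff_eq_add, ← sum_sub_distrib]
    simp only [S, mul_sub, mul_one]
    ring
  have hw : 0 ≤ 1 - P.ρ * y i t := by
    nlinarith [hy.nonneg h1 h2 i, hy.le_one h1 h2 i]
  have hri := hr i
  rw [hv_eq, mul_zero, sub_zero, mul_one, hbracket]
  by_cases hblock : ∃ k, P.pref j (some k) (some i) ∧ y k t = 1
  · obtain ⟨k, hk, hyk⟩ := hblock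
    have hS : S ≤ 0 := sum_nonpos fun s _ => mul_nonpos_of_nonneg_of_nonpos (hd j s)
      (by linarith [le_oMax_of_pref (y := y) (s := s) (t := t) hk])
    exact (mul_nonpos_of_nonneg_of_nonpos hri (mul_nonpos_of_nonneg_of_nonpos hw hS)).trans
      (profitFAt_nonneg hP hy)
  push Not at hblock
  calc P.r i * ((1 - P.ρ * y i t) * S)
      ≤ P.r i * ((1 - P.ρ * y i t) * P.D j (P.lastCap y zs j t) t) := by
        gcongr
        exact sum_d_mul_one_sub_oMax_le (hd j) _
    _ = P.r i * P.D j (P.lastCap y zs j t) t * (1 - P.ρ * y i t) := by ring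
    _ ≤ P.profitFAt y zs j t := unblocked_le_profitFAt hP hy h1 h2 hi hpat hz hblock

end Terms

variable [Fintype J]

section Bounds

variable {P : CDFLP I J} {y' zs y z : I → ℕ → ℝ}

lemma sum_le_profitF {B : ℕ → ℕ → J → ℝ}
    (h : ∀ t ∈ Icc 1 P.T, ∀ j, ∑ ℓ ∈ range t, B t ℓ j ≤ P.profitFAt y z j t) :
    ∑ t ∈ Icc 1 P.T, ∑ ℓ ∈ range t, ∑ j, B t ℓ j ≤ P.profitF y z := by
  refine sum_le_sum fun t ht => ?_
  rw [sum_comm, sum_comm (s := range t)]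
  exact sum_le_sum fun j _ => h t ht j

lemma tailoredBound_le_profitF (hP : P.Valid) (hy' : P.IsSched y') (hy : P.IsSched y) :
    P.tailoredBound y' zs y ≤ P.profitF y zs :=
  sum_le_profitF fun t ht j => sum_le_of_v_support (hP.2.2.2.2.2 j).toIsStrictOrder
    (mem_Icc.1 ht).1 (profitFAt_nonneg hP hy) (fun ℓ i hv => by simp [hv])
    fun _ _ hi hv => tailored_term_le_profitFAt hP hy' hy (mem_Icc.1 ht).1 (mem_Icc.1 ht).2 hi hv

lemma tightenedBound_le_profitF (hP : P.Valid) (hy : P.IsSched y) :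
    P.tightenedBound zs y ≤ P.profitF y zs :=
  sum_le_profitF fun t ht j => sum_le_of_v_support (hP.2.2.2.2.2 j).toIsStrictOrder
    (mem_Icc.1 ht).1 (profitFAt_nonneg hP hy) (fun ℓ i hv => by simp [hv])
    fun _ _ hi hv => tightened_term_le_profitFAt hP hy (mem_Icc.1 ht).1 (mem_Icc.1 ht).2 hi hv

end Bounds

/-- **Corollary 1.**  Both the tailored and the tightened value-function cuts, built
from a bilevel feasible pair `(y', zs)`, hold for every pessimistically bilevel
feasible pair `(y, z)`. -/
theorem cuts_valid_pessimistic (P : CDFLP I J) (hP : P.Valid)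
    (y' zs : I → ℕ → ℝ) (hfeas : P.BilevelFeasible y' zs)
    (y z : I → ℕ → ℝ) (hyz : P.PessFeasible y z) :
    P.tailoredBound y' zs y ≤ P.profitF y z ∧ P.tightenedBound zs y ≤ P.profitF y z := by
  obtain ⟨hy', hzs, -⟩ := hfeas
  obtain ⟨hy, ⟨-, hopt⟩, -⟩ := hyz
  have hz : P.profitF y zs ≤ P.profitF y z := hopt zs hzs
  exact ⟨(tailoredBound_le_profitF hP hy' hy).trans hz,
    (tightenedBound_le_profitF hP hy).trans hz⟩

end CDFLP
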